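/- arXiv:1006.4995 — 4 statements merged into one kernel-verified Lean document; each statement's English description precedes it below -/
import Mathlib

section
/- Let w : ℤ → ℝ be supported in {-n, ..., 0} and let p(t) = Σ_{ν=0}^{n} t^ν · w(-ν) be its accompanying polynomial. Suppose t = 1 is a root of p of order at least m+1, i.e., p^(j)(1) = 0 for all j = 0, ..., m. Then for every integer x ≥ 1, Σ_{k=x}^{x+n} k^m · w(x-k) = 0. -/
/-!
With `c ν = w (-ν)`, the `j`-th derivative of the accompanying polynomial at `t = 1` is the
moment `∑ ν, ν.descFactorial j * c ν`. So `c` annihilates the falling factorials of degree `≤ m`;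
these span all polynomials of degree `≤ m` (subtract the leading term and induct), so `c` also
annihilates `ν ↦ (x + ν) ^ m`, which after the substitution `k = x + ν` is the claim.
-/

open Polynomial Finset

theorem iteratedDeriv_sum_pow_mul_at_one (s : Finset ℕ) (c : ℕ → ℝ) (j : ℕ) :
    iteratedDeriv j (fun t : ℝ => ∑ ν ∈ s, t ^ ν * c ν) 1 =
      ∑ ν ∈ s, (ν.descFactorial j : ℝ) * c ν := by
  rw [iteratedDeriv_fun_sum fun ν _ => by fun_prop]
  simp [iteratedDeriv_mul_const_field]

section DescPochhammer

variable {R : Type*} [CommRing R] [IsDomain R]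

theorem natDegree_sub_C_coeff_mul_descPochhammer_le {q : R[X]} {m : ℕ}
    (hq : q.natDegree ≤ m + 1) :
    (q - C (q.coeff (m + 1)) * descPochhammer R (m + 1)).natDegree ≤ m := by
  have hdeg := descPochhammer_natDegree R (m + 1)
  rw [natDegree_le_iff_coeff_eq_zero]
  intro N hN
  rw [coeff_sub, coeff_C_mul]
  obtain rfl | hlt := (Nat.succ_le_of_lt hN).eq_or_lt
  · have hlead := (monic_descPochhammer R (m + 1)).coeff_natDegree
    rw [hdeg] at hlead
    rw [Nat.succ_eq_add_one, hlead, mul_one, sub_self]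
  · rw [coeff_eq_zero_of_natDegree_lt (hq.trans_lt hlt),
      coeff_eq_zero_of_natDegree_lt (hdeg.trans_lt hlt), mul_zero, sub_zero]

theorem sum_eval_mul_eq_zero_of_sum_descFactorial_mul_eq_zero {s : Finset ℕ} {c : ℕ → R}
    {m : ℕ} (hc : ∀ j ≤ m, ∑ ν ∈ s, (ν.descFactorial j : R) * c ν = 0)
    {q : R[X]} (hq : q.natDegree ≤ m) :
    ∑ ν ∈ s, q.eval (ν : R) * c ν = 0 := by
  induction m generalizing q with
  | zero =>
    rw [eq_C_of_natDegree_le_zero hq]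
    simpa [← mul_sum] using congrArg (q.coeff 0 * ·) (hc 0 le_rfl)
  | succ m ih =>
    have hsplit : ∀ ν : ℕ, q.eval (ν : R) * c ν =
        q.coeff (m + 1) * ((ν.descFactorial (m + 1) : R) * c ν) +
          (q - C (q.coeff (m + 1)) * descPochhammer R (m + 1)).eval (ν : R) * c ν := by
      intro ν
      simp only [eval_sub, eval_mul, eval_C, descPochhammer_eval_eq_descFactorial]
      ring
    simp only [hsplit, sum_add_distrib, ← mul_sum, hc (m + 1) le_rfl, mul_zero, zero_add]
    exact ih (fun j hj => hc j (hj.trans m.le_succ))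
      (natDegree_sub_C_coeff_mul_descPochhammer_le hq)

end DescPochhammer

theorem Int.sum_Icc_add_natCast {M : Type*} [AddCommMonoid M] (x : ℤ) (n : ℕ) (f : ℤ → M) :
    ∑ k ∈ Icc x (x + n), f k = ∑ ν ∈ Finset.range (n + 1), f (x + ν) := by
  have himage : Icc x (x + n) = (Finset.range (n + 1)).image (fun ν : ℕ => x + ν) := by
    ext k
    simp only [mem_Icc, mem_image, Finset.mem_range]
    constructor
    · rintro ⟨hxk, hkx⟩
      exact ⟨(k - x).toNat, by omega, by omega⟩
    · rintro ⟨ν, hν, rfl⟩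
      omega
  rw [himage, sum_image fun a _ b _ h => by simpa using h]

theorem stmt_0_general (n m : ℕ) (w : ℤ → ℝ)
    (hroot : ∀ j : ℕ, j ≤ m →
      iteratedDeriv j (fun t : ℝ => ∑ ν ∈ Finset.range (n + 1), t ^ ν * w (-(ν : ℤ))) 1 = 0) :
    ∀ x : ℤ, 1 ≤ x → ∑ k ∈ Finset.Icc x (x + (n : ℤ)), (k : ℝ) ^ m * w (x - k) = 0 := by
  intro x _
  have hmoments : ∀ j ≤ m, ∑ ν ∈ range (n + 1), (ν.descFactorial j : ℝ) * w (-(ν : ℤ)) = 0 :=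
    fun j hj => iteratedDeriv_sum_pow_mul_at_one _ _ j ▸ hroot j hj
  rw [Int.sum_Icc_add_natCast]
  convert sum_eval_mul_eq_zero_of_sum_descFactorial_mul_eq_zero hmoments
    (natDegree_pow_X_add_C m (x : ℝ)).le using 2
  simp [add_comm]

/-- If the accompanying polynomial of `w` (supported in `{-n,…,0}`) has a root of order
at least `m+1` at `t = 1`, then `∑_{k=x}^{x+n} k^m w(x-k) = 0` for every integer `x ≥ 1`. -/
theorem stmt_0 (n m : ℕ) (w : ℤ → ℝ)
    (hsupp : ∀ x : ℤ, w x ≠ 0 → -(n : ℤ) ≤ x ∧ x ≤ 0)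
    (hroot : ∀ j : ℕ, j ≤ m →
      iteratedDeriv j (fun t : ℝ => ∑ ν ∈ Finset.range (n + 1), t ^ ν * w (-(ν : ℤ))) 1 = 0) :
    ∀ x : ℤ, 1 ≤ x → ∑ k ∈ Finset.Icc x (x + (n : ℤ)), (k : ℝ) ^ m * w (x - k) = 0 :=
  stmt_0_general n m w hroot
end

section
/- Let w : ℤ → ℝ be such that the Laurent series F(t) = Σ_{ν∈ℤ} t^ν · w(-ν) converges absolutely for all t in (1-ε, 1+ε) for some ε > 0, and suppose F has a root of order exactly m at t = 1 with c = F^(m)(1). Then for every integer x ≥ 1, Σ_{k∈ℤ} k^m · w(x-k) = c, the series being absolutely convergent; and if the order of the root at t = 1 exceeds D, then Σ_{k∈ℤ} k^D · w(x-k) = 0 for all x ≥ 1. -/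
/-!
Write `c ν = w (-ν)` and `L P = ∑ ν, P(ν) c ν` for polynomials `P`. Fix `p < 1 < q` in
`(1 - ε, 1 + ε)`. On compact subintervals of `(p, q)` a polynomial weight times `t ^ ν` is
dominated by `C (p ^ ν + q ^ ν)`, so the Laurent series may be differentiated termwise:
`F^{(j)}(1) = L (descPochhammer j)`. The substitution `k = ν + x` turns `∑ k, k ^ n w (x - k)`
into `L ((X + x) ^ n)`. Expanding the monic polynomial `(X + x) ^ n` in the descending-factorial
basis, every term of degree below `n` is killed by the vanishing derivatives, which leaves
`F^{(n)}(1)`.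
-/

open Polynomial Filter Set

lemma exists_one_add_pow_mul_pow_le (i : ℕ) {r : ℝ} (hr₀ : 0 ≤ r) (hr₁ : r < 1) :
    ∃ C, ∀ n : ℕ, (1 + (n : ℝ) ^ i) * r ^ n ≤ C := by
  obtain ⟨B, hB⟩ := (tendsto_pow_const_mul_const_pow_of_abs_lt_one i
    (by rwa [abs_of_nonneg hr₀])).bddAbove_range
  refine ⟨1 + B, fun n => ?_⟩
  have h₁ : r ^ n ≤ 1 := pow_le_one₀ hr₀ hr₁.le
  have h₂ : (n : ℝ) ^ i * r ^ n ≤ B := hB ⟨n, rfl⟩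
  linarith [add_mul 1 ((n : ℝ) ^ i) (r ^ n)]

lemma exists_one_add_abs_pow_mul_zpow_le {p q Q : ℝ} (hp : 0 < p) (hpq : p < q) (hqQ : q < Q)
    (i : ℕ) : ∃ C, ∀ ν : ℤ, (1 + |(ν : ℝ)| ^ i) * q ^ ν ≤ C * (p ^ ν + Q ^ ν) := by
  have hq : 0 < q := hp.trans hpq
  have hQ : 0 < Q := hq.trans hqQ
  obtain ⟨C₁, hC₁⟩ :=
    exists_one_add_pow_mul_pow_le i (div_nonneg hq.le hQ.le) ((div_lt_one hQ).2 hqQ)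
  obtain ⟨C₂, hC₂⟩ :=
    exists_one_add_pow_mul_pow_le i (div_nonneg hp.le hq.le) ((div_lt_one hq).2 hpq)
  have hC₁₀ : 0 ≤ C₁ := le_trans (by positivity) (hC₁ 0)
  refine ⟨max C₁ C₂, fun ν => ?_⟩
  obtain ⟨n, rfl | rfl⟩ := Int.eq_nat_or_neg ν
  · calc (1 + |((n : ℤ) : ℝ)| ^ i) * q ^ (n : ℤ)
          = (1 + (n : ℝ) ^ i) * (q / Q) ^ n * Q ^ n := by
          rw [zpow_natCast, div_pow, Int.cast_natCast, Nat.abs_cast]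
          field_simp
      _ ≤ max C₁ C₂ * Q ^ n := by gcongr; exact (hC₁ n).trans (le_max_left _ _)
      _ ≤ max C₁ C₂ * (p ^ (n : ℤ) + Q ^ (n : ℤ)) := by
          rw [zpow_natCast, zpow_natCast]
          gcongr
          exact le_add_of_nonneg_left (pow_pos hp n).le
  · calc (1 + |((-n : ℤ) : ℝ)| ^ i) * q ^ (-n : ℤ)
          = (1 + (n : ℝ) ^ i) * (p / q) ^ n * p ^ (-n : ℤ) := by
          rw [zpow_neg, zpow_neg, zpow_natCast, zpow_natCast, div_pow, Int.cast_neg, abs_neg,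
            Int.cast_natCast, Nat.abs_cast]
          field_simp
      _ ≤ max C₁ C₂ * p ^ (-n : ℤ) := by gcongr; exact (hC₂ n).trans (le_max_right _ _)
      _ ≤ max C₁ C₂ * (p ^ (-n : ℤ) + Q ^ (-n : ℤ)) := by
          gcongr
          exact le_add_of_nonneg_right (zpow_pos hQ _).le

lemma zpow_le_zpow_add_zpow {K : Type*} [Field K] [LinearOrder K] [IsStrictOrderedRing K]
    {a b t : K} (ha : 0 < a) (hat : a ≤ t) (htb : t ≤ b) (ν : ℤ) : t ^ ν ≤ a ^ ν + b ^ ν := by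
  rcases le_or_gt 0 ν with hν | hν
  · exact (zpow_le_zpow_left₀ hν (ha.le.trans hat) htb).trans
      (le_add_of_nonneg_left (zpow_pos ha ν).le)
  · have hta : t ^ ν ≤ a ^ ν := by
      rw [← neg_neg ν, ← inv_zpow' t, ← inv_zpow' a]
      exact zpow_le_zpow_left₀ (by lia) (inv_nonneg.2 (ha.le.trans hat)) (inv_anti₀ ha hat)
    exact hta.trans (le_add_of_nonneg_right (zpow_pos (ha.trans_le (hat.trans htb)) ν).le)

lemma Polynomial.exists_abs_eval_le (P : ℝ[X]) :
    ∃ C, 0 ≤ C ∧ ∀ x : ℝ, |P.eval x| ≤ C * (1 + |x| ^ P.natDegree) := by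
  refine ⟨∑ k ∈ Finset.range (P.natDegree + 1), |P.coeff k|, by positivity, fun x => ?_⟩
  rw [eval_eq_sum_range, Finset.sum_mul]
  refine (Finset.abs_sum_le_sum_abs _ _).trans (Finset.sum_le_sum fun k hk => ?_)
  rw [abs_mul, abs_pow]
  gcongr
  rcases le_total |x| 1 with h | h
  · linarith [pow_le_one₀ (abs_nonneg x) h (n := k), pow_nonneg (abs_nonneg x) P.natDegree]
  · linarith [pow_le_pow_right₀ h (Finset.mem_range_succ_iff.1 hk)]

lemma exists_abs_eval_mul_zpow_sub_le {p a b q : ℝ} (hp : 0 < p) (hpa : p < a) (hab : a ≤ b)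
    (hbq : b < q) (P : ℝ[X]) (j : ℤ) :
    ∃ C, ∀ t ∈ Icc a b, ∀ ν : ℤ, |P.eval (ν : ℝ)| * t ^ (ν - j) ≤ C * (p ^ ν + q ^ ν) := by
  have ha : 0 < a := hp.trans hpa
  obtain ⟨C₀, hC₀, hP⟩ := P.exists_abs_eval_le
  obtain ⟨Ca, hCa⟩ := exists_one_add_abs_pow_mul_zpow_le hp hpa (hab.trans_lt hbq) P.natDegree
  obtain ⟨Cb, hCb⟩ := exists_one_add_abs_pow_mul_zpow_le hp (hpa.trans_le hab) hbq P.natDegree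
  refine ⟨C₀ * (Ca + Cb) * (a ^ (-j) + b ^ (-j)), ?_⟩
  rintro t ⟨hat, htb⟩ ν
  have ht : 0 < t := ha.trans_le hat
  have hb : 0 < b := ha.trans_le hab
  set N := 1 + |(ν : ℝ)| ^ P.natDegree
  calc |P.eval (ν : ℝ)| * t ^ (ν - j) = |P.eval (ν : ℝ)| * t ^ ν * t ^ (-j) := by
        rw [sub_eq_add_neg, zpow_add₀ ht.ne', mul_assoc]
    _ ≤ C₀ * N * (a ^ ν + b ^ ν) * (a ^ (-j) + b ^ (-j)) := by
        have := hP ν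
        have := zpow_le_zpow_add_zpow ha hat htb ν
        have := zpow_le_zpow_add_zpow ha hat htb (-j)
        gcongr
    _ = C₀ * (N * a ^ ν + N * b ^ ν) * (a ^ (-j) + b ^ (-j)) := by ring
    _ ≤ C₀ * (Ca * (p ^ ν + q ^ ν) + Cb * (p ^ ν + q ^ ν)) * (a ^ (-j) + b ^ (-j)) := by
        gcongr C₀ * (?_ + ?_) * _
        exacts [hCa ν, hCb ν]
    _ = C₀ * (Ca + Cb) * (a ^ (-j) + b ^ (-j)) * (p ^ ν + q ^ ν) := by ring

lemma hasDerivAt_descPochhammer_eval_mul_zpow {𝕜 : Type*} [NontriviallyNormedField 𝕜]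
    (j : ℕ) (ν : ℤ) {t : 𝕜} (ht : t ≠ 0) :
    HasDerivAt (fun s => (descPochhammer 𝕜 j).eval (ν : 𝕜) * s ^ (ν - j))
      ((descPochhammer 𝕜 (j + 1)).eval (ν : 𝕜) * t ^ (ν - (j + 1 : ℕ))) t := by
  refine ((hasDerivAt_zpow (ν - j) t (Or.inl ht)).const_mul
    ((descPochhammer 𝕜 j).eval (ν : 𝕜))).congr_deriv ?_
  rw [descPochhammer_succ_eval, Nat.cast_succ, ← sub_sub]
  push_cast
  ring

lemma exists_summable_zpow_add_zpow_mul_abs {ε : ℝ} (hε : 0 < ε) {c : ℤ → ℝ}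
    (hconv : ∀ t ∈ Ioo (1 - ε) (1 + ε), Summable fun ν : ℤ => |t ^ ν * c ν|) :
    ∃ p q : ℝ, 0 < p ∧ p < 1 ∧ 1 < q ∧ Summable fun ν : ℤ => (p ^ ν + q ^ ν) * |c ν| := by
  set δ := min (ε / 2) (1 / 2)
  have hδ : 0 < δ := by positivity
  have hδε : δ < ε := (min_le_left _ _).trans_lt (half_lt_self hε)
  have hδ1 : δ ≤ 1 / 2 := min_le_right _ _
  have hp : (0 : ℝ) < 1 - δ := by linarith
  have hq : (0 : ℝ) < 1 + δ := by linarith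
  refine ⟨1 - δ, 1 + δ, hp, by linarith, by linarith, ?_⟩
  refine ((hconv (1 - δ) ⟨by linarith, by linarith⟩).add
    (hconv (1 + δ) ⟨by linarith, by linarith⟩)).congr fun ν => ?_
  rw [abs_mul, abs_mul, abs_of_pos (zpow_pos hp ν), abs_of_pos (zpow_pos hq ν), add_mul]

section LaurentSeries

variable {c : ℤ → ℝ} {p q : ℝ}

lemma summable_eval_mul_zpow_sub_mul (hc : Summable fun ν : ℤ => (p ^ ν + q ^ ν) * |c ν|)
    (hp : 0 < p) {t : ℝ} (hpt : p < t) (htq : t < q) (P : ℝ[X]) (j : ℤ) :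
    Summable fun ν : ℤ => P.eval (ν : ℝ) * t ^ (ν - j) * c ν := by
  obtain ⟨C, hC⟩ := exists_abs_eval_mul_zpow_sub_le hp hpt le_rfl htq P j
  refine .of_norm_bounded (hc.mul_left C) fun ν => ?_
  rw [Real.norm_eq_abs, abs_mul, abs_mul, abs_of_pos (zpow_pos (hp.trans hpt) _), ← mul_assoc]
  exact mul_le_mul_of_nonneg_right (hC t ⟨le_rfl, le_rfl⟩ ν) (abs_nonneg _)

lemma hasDerivAt_tsum_descPochhammer_eval_mul_zpow_mul
    (hc : Summable fun ν : ℤ => (p ^ ν + q ^ ν) * |c ν|) (hp : 0 < p) {t : ℝ} (ht : t ∈ Ioo p q)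
    (j : ℕ) :
    HasDerivAt (fun s => ∑' ν : ℤ, (descPochhammer ℝ j).eval (ν : ℝ) * s ^ (ν - j) * c ν)
      (∑' ν : ℤ, (descPochhammer ℝ (j + 1)).eval (ν : ℝ) * t ^ (ν - (j + 1 : ℕ)) * c ν) t := by
  obtain ⟨a, hpa, hat⟩ := exists_between ht.1
  obtain ⟨b, htb, hbq⟩ := exists_between ht.2
  obtain ⟨C, hC⟩ := exists_abs_eval_mul_zpow_sub_le hp hpa (hat.trans htb).le hbq
    (descPochhammer ℝ (j + 1)) (j + 1 : ℕ)
  refine hasDerivAt_tsum_of_isPreconnected (u := fun ν => C * ((p ^ ν + q ^ ν) * |c ν|))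
    (g' := fun ν s => (descPochhammer ℝ (j + 1)).eval (ν : ℝ) * s ^ (ν - (j + 1 : ℕ)) * c ν)
    (hc.mul_left C) isOpen_Ioo isPreconnected_Ioo
    (fun ν s hs => ?_) (fun ν s hs => ?_) ⟨hat, htb⟩
    (summable_eval_mul_zpow_sub_mul hc hp ht.1 ht.2 _ j) ⟨hat, htb⟩
  · exact (hasDerivAt_descPochhammer_eval_mul_zpow j ν
      (hp.trans (hpa.trans hs.1)).ne').mul_const (c ν)
  · rw [Real.norm_eq_abs, abs_mul, abs_mul, abs_of_pos (zpow_pos (hp.trans (hpa.trans hs.1)) _),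
      ← mul_assoc]
    exact mul_le_mul_of_nonneg_right (hC s (Ioo_subset_Icc_self hs) ν) (abs_nonneg _)

lemma iteratedDeriv_tsum_zpow_mul (hc : Summable fun ν : ℤ => (p ^ ν + q ^ ν) * |c ν|)
    (hp : 0 < p) (j : ℕ) {t : ℝ} (ht : t ∈ Ioo p q) :
    iteratedDeriv j (fun s => ∑' ν : ℤ, s ^ ν * c ν) t =
      ∑' ν : ℤ, (descPochhammer ℝ j).eval (ν : ℝ) * t ^ (ν - j) * c ν := by
  induction j generalizing t with
  | zero => simp
  | succ j ih =>
    rw [iteratedDeriv_succ, ← (hasDerivAt_tsum_descPochhammer_eval_mul_zpow_mul hc hp ht j).deriv]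
    exact EventuallyEq.deriv_eq (eventually_of_mem (isOpen_Ioo.mem_nhds ht) fun s hs => ih hs)

end LaurentSeries

theorem LinearMap.map_eq_coeff_smul_descPochhammer {R M : Type*} [CommRing R] [Nontrivial R]
    [NoZeroDivisors R] [AddCommGroup M] [Module R M] (L : R[X] →ₗ[R] M) {n : ℕ}
    (hL : ∀ j < n, L (descPochhammer R j) = 0) {P : R[X]} (hP : P.natDegree ≤ n) :
    L P = P.coeff n • L (descPochhammer R n) := by
  induction n generalizing P with
  | zero =>
    conv_lhs => rw [eq_C_of_natDegree_le_zero hP, ← mul_one (C _), C_mul']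
    simp
  | succ n ih =>
    set Q := P - P.coeff (n + 1) • descPochhammer R (n + 1)
    have hmonic := monic_descPochhammer R (n + 1)
    have hQ : Q.natDegree ≤ n := by
      have hQ' : Q.natDegree ≤ n + 1 := (natDegree_sub_le_of_le hP
        ((natDegree_smul_le _ _).trans (descPochhammer_natDegree R _).le)).trans_eq (max_self _)
      refine natDegree_le_pred hQ' ?_
      have := hmonic.coeff_natDegree
      rw [descPochhammer_natDegree] at this
      simp [Q, this]
    have hLQ : L Q = 0 := by
      rw [ih (fun j hj => hL j (by lia)) hQ, hL n (by lia), smul_zero]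
    conv_lhs => rw [← sub_add_cancel P (P.coeff (n + 1) • descPochhammer R (n + 1))]
    rw [map_add, hLQ, map_smul, zero_add]

noncomputable def tsumEvalMul (c : ℤ → ℝ)
    (hc : ∀ P : ℝ[X], Summable fun ν : ℤ => P.eval (ν : ℝ) * c ν) : ℝ[X] →ₗ[ℝ] ℝ where
  toFun P := ∑' ν : ℤ, P.eval (ν : ℝ) * c ν
  map_add' P Q := by simp only [eval_add, add_mul]; exact (hc P).tsum_add (hc Q)
  map_smul' r P := by
    simp only [eval_smul, smul_eq_mul, mul_assoc, tsum_mul_left, RingHom.id_apply]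

lemma pow_mul_sub_comp_addRight (w : ℤ → ℝ) (n : ℕ) (x : ℤ) :
    (fun k : ℤ => (k : ℝ) ^ n * w (x - k)) ∘ Equiv.addRight x =
      fun ν : ℤ => ((X + C (x : ℝ)) ^ n).eval (ν : ℝ) * w (-ν) := by
  ext ν
  simp [show x - (ν + x) = -ν by ring]

lemma summable_abs_pow_mul_sub_iff (w : ℤ → ℝ) (n : ℕ) (x : ℤ) :
    (Summable fun k : ℤ => |(k : ℝ) ^ n * w (x - k)|) ↔
      Summable fun ν : ℤ => |((X + C (x : ℝ)) ^ n).eval (ν : ℝ) * w (-ν)| := by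
  rw [← (Equiv.addRight x).summable_iff]
  exact summable_congr fun ν => congrArg abs (congrFun (pow_mul_sub_comp_addRight w n x) ν)

lemma tsum_pow_mul_sub (w : ℤ → ℝ) (n : ℕ) (x : ℤ) :
    ∑' k : ℤ, (k : ℝ) ^ n * w (x - k) = ∑' ν : ℤ, ((X + C (x : ℝ)) ^ n).eval (ν : ℝ) * w (-ν) := by
  rw [← (Equiv.addRight x).tsum_eq]
  exact tsum_congr fun ν => congrFun (pow_mul_sub_comp_addRight w n x) ν

theorem stmt_5_general (ε : ℝ) (hε : 0 < ε) (w : ℤ → ℝ) (m : ℕ)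
    (hconv : ∀ t ∈ Set.Ioo (1 - ε) (1 + ε), Summable fun ν : ℤ => |t ^ ν * w (-ν)|)
    (F : ℝ → ℝ) (hFdef : F = fun t : ℝ => ∑' ν : ℤ, t ^ ν * w (-ν))
    (hroot : ∀ j : ℕ, j < m → iteratedDeriv j F 1 = 0) :
    (∀ x : ℤ, 1 ≤ x →
      (Summable fun k : ℤ => |(k : ℝ) ^ m * w (x - k)|) ∧
      ∑' k : ℤ, (k : ℝ) ^ m * w (x - k) = iteratedDeriv m F 1) ∧
    ∀ D : ℕ, (∀ j : ℕ, j ≤ D → iteratedDeriv j F 1 = 0) →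
      ∀ x : ℤ, 1 ≤ x → ∑' k : ℤ, (k : ℝ) ^ D * w (x - k) = 0 := by
  obtain ⟨p, q, hp, hp1, h1q, hc⟩ := exists_summable_zpow_add_zpow_mul_abs hε hconv
  have hsum (P : ℝ[X]) : Summable fun ν : ℤ => |P.eval (ν : ℝ) * w (-ν)| := by
    simpa using (summable_eval_mul_zpow_sub_mul hc hp hp1 h1q P 0).abs
  set L := tsumEvalMul (fun ν => w (-ν)) fun P => (hsum P).of_abs
  have hL (j : ℕ) : L (descPochhammer ℝ j) = iteratedDeriv j F 1 := by
    rw [hFdef, iteratedDeriv_tsum_zpow_mul hc hp j ⟨hp1, h1q⟩]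
    simp [L, tsumEvalMul]
  have hmoment (n : ℕ) (x : ℤ) : ∑' k : ℤ, (k : ℝ) ^ n * w (x - k) = L ((X + C (x : ℝ)) ^ n) :=
    tsum_pow_mul_sub w n x
  refine ⟨fun x _ => ⟨(summable_abs_pow_mul_sub_iff w m x).2 (hsum _), ?_⟩, fun D hD x _ => ?_⟩
  · rw [hmoment, L.map_eq_coeff_smul_descPochhammer (fun j hj => by rw [hL, hroot j hj])
      (natDegree_pow_X_add_C m _).le, coeff_X_add_C_pow]
    simp [hL]
  · rw [hmoment, L.map_eq_coeff_smul_descPochhammer (fun j hj => by rw [hL, hD j hj.le])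
      (natDegree_pow_X_add_C D _).le, hL, hD D le_rfl, smul_zero]

/-- For `w : ℤ → ℝ` whose Laurent series `F(t) = ∑_ν t^ν w(-ν)` converges absolutely on
`(1-ε, 1+ε)`: if `F` has a root of order exactly `m` at `t = 1` with `c = F^{(m)}(1)`, then
`∑_{k∈ℤ} k^m w(x-k) = c` (absolutely convergent) for all integers `x ≥ 1`; and if the root
order exceeds `D` then `∑_{k∈ℤ} k^D w(x-k) = 0` for all `x ≥ 1`. -/
theorem stmt_5 (ε : ℝ) (hε : 0 < ε) (w : ℤ → ℝ) (m : ℕ)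
    (hconv : ∀ t ∈ Set.Ioo (1 - ε) (1 + ε), Summable fun ν : ℤ => |t ^ ν * w (-ν)|)
    (F : ℝ → ℝ) (hFdef : F = fun t : ℝ => ∑' ν : ℤ, t ^ ν * w (-ν))
    (hroot : ∀ j : ℕ, j < m → iteratedDeriv j F 1 = 0)
    (hc : iteratedDeriv m F 1 ≠ 0) :
    (∀ x : ℤ, 1 ≤ x →
      (Summable fun k : ℤ => |(k : ℝ) ^ m * w (x - k)|) ∧
      ∑' k : ℤ, (k : ℝ) ^ m * w (x - k) = iteratedDeriv m F 1) ∧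
    ∀ D : ℕ, (∀ j : ℕ, j ≤ D → iteratedDeriv j F 1 = 0) →
      ∀ x : ℤ, 1 ≤ x → ∑' k : ℤ, (k : ℝ) ^ D * w (x - k) = 0 :=
  stmt_5_general ε hε w m hconv F hFdef hroot
end

section
/- Let u : ℤ^d → ℝ be not identically zero with support contained in {-n, ..., 0}^d. Then there exist nonnegative integers M_1, ..., M_d, each at most n, and a nonzero real constant c, such that for all x = (x_1, ..., x_d) with every x_i ≥ 1, Σ_{k∈ℕ^d} k_1^{M_1} ⋯ k_d^{M_d} · u(x_1 - k_1, ..., x_d - k_d) = c. In particular, setting b_k = k_1^{M_1}⋯k_d^{M_d}, the coefficients satisfy |b_k| ≤ (L+n)^{d·n} for all k ∈ {0,...,L+n}^d. -/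
/-! Write `v j = u (-j)` for `j ∈ {0,…,n}^d`. For `x ≥ 0` the sum is `∑_j ∏ (j_i + x_i)^{M_i} v j`,
and the binomial expansion turns it into a combination of the moments
`μ t = ∑_j ∏ j_i^{t_i} v j` with `t ≤ M`, the moment `μ M` having coefficient `1`.
A multivariate Vandermonde argument shows that `v ≠ 0` has a nonzero moment with all exponents
`≤ n`; taking `M` minimal among the exponents of nonzero moments leaves only `c = μ M`. -/

open Finset

theorem Matrix.eq_zero_of_forall_sum_prod_pow_mul_eq_zero {R : Type*} [CommRing R] [IsDomain R]
    {m : ℕ} {f : Fin m → R} (hf : Function.Injective f) :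
    ∀ {d : ℕ} {v : (Fin d → Fin m) → R},
      (∀ t : Fin d → Fin m, ∑ j, (∏ i, f (j i) ^ (t i : ℕ)) * v j = 0) → v = 0
  | 0, v, h => funext fun j => by simpa [Subsingleton.elim _ j] using h j
  | d + 1, v, h => by
    have hcons : ∀ G : (Fin (d + 1) → Fin m) → R,
        ∑ j, G j = ∑ a, ∑ g : Fin d → Fin m, G (Fin.cons a g) := fun G => by
      rw [← (Fin.consEquiv fun _ => Fin m).sum_comp, Fintype.sum_prod_type]
      rfl
    have hslice : ∀ (s : Fin d → Fin m) (a : Fin m),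
        ∑ g : Fin d → Fin m, (∏ i, f (g i) ^ (s i : ℕ)) * v (Fin.cons a g) = 0 := fun s =>
      congrFun <| Matrix.eq_zero_of_forall_pow_sum_mul_pow_eq_zero hf fun t₀ => by
        rw [← h (Fin.cons t₀ s), hcons]
        refine sum_congr rfl fun a _ => ?_
        rw [sum_mul]
        refine sum_congr rfl fun g _ => ?_
        simp only [Fin.prod_univ_succ, Fin.cons_zero, Fin.cons_succ]
        ring
    funext j
    rw [← Fin.cons_self_tail j]
    exact congrFun (eq_zero_of_forall_sum_prod_pow_mul_eq_zero hf (hslice · (j 0))) _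

theorem sum_prod_add_pow_mul_eq_of_lower_moments_eq_zero {R J : Type*} [CommRing R]
    [Fintype J] {d : ℕ} (p : J → Fin d → R) (w : J → R) (a : Fin d → R) {M : Fin d → ℕ}
    (h : ∀ t < M, ∑ j, (∏ i, p j i ^ t i) * w j = 0) :
    ∑ j, (∏ i, (p j i + a i) ^ M i) * w j = ∑ j, (∏ i, p j i ^ M i) * w j := by
  classical
  have hexpand : ∀ j, ∏ i, (p j i + a i) ^ M i = ∑ t ∈ Fintype.piFinset (fun i => range (M i + 1)),
      (∏ i, a i ^ (M i - t i) * (M i).choose (t i)) * ∏ i, p j i ^ t i := fun j => by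
    simp only [add_pow, prod_univ_sum, ← prod_mul_distrib]
    refine sum_congr rfl fun t _ => prod_congr rfl fun i _ => by ring
  simp_rw [hexpand, sum_mul, mul_assoc]
  rw [sum_comm, sum_eq_single_of_mem M (by simp [Fintype.mem_piFinset])]
  · simp
  · intro t ht htM
    have htM : t < M := lt_of_le_of_ne (fun i => by
      simpa [Nat.lt_succ_iff] using Fintype.mem_piFinset.mp ht i) htM
    rw [← mul_sum, h t htM, mul_zero]

section BoxSupport

variable {d n : ℕ} {u : (Fin d → ℤ) → ℝ}

noncomputable def boxMoment (n : ℕ) (u : (Fin d → ℤ) → ℝ) (t : Fin d → ℕ) : ℝ :=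
  ∑ j : Fin d → Fin (n + 1), (∏ i, ((j i : ℕ) : ℝ) ^ t i) * u (fun i => -((j i : ℕ) : ℤ))

theorem finsum_mul_sub_eq_sum_box
    (hsupp : ∀ x : Fin d → ℤ, u x ≠ 0 → ∀ i, -(n : ℤ) ≤ x i ∧ x i ≤ 0)
    (f : (Fin d → ℕ) → ℝ) (x : Fin d → ℕ) :
    ∑ᶠ k : Fin d → ℕ, f k * u (fun i => (x i : ℤ) - k i) =
      ∑ j : Fin d → Fin (n + 1), f (fun i => j i + x i) * u (fun i => -((j i : ℕ) : ℤ)) := by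
  classical
  set φ : (Fin d → Fin (n + 1)) → Fin d → ℕ := fun j i => j i + x i
  have hφ : Function.Injective φ := fun j j' h => funext fun i =>
    Fin.ext (Nat.add_right_cancel (congrFun h i))
  have hsub : (Function.support fun k : Fin d → ℕ => f k * u (fun i => (x i : ℤ) - k i)) ⊆
      (univ.image φ : Finset _) := by
    intro k hk
    have hbox := hsupp _ (right_ne_zero_of_mul hk)
    simp only [coe_image, coe_univ, Set.image_univ, Set.mem_range]
    refine ⟨fun i => ⟨k i - x i, by have := hbox i; omega⟩, funext fun i => ?_⟩
    have := hbox i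
    simp only [φ]
    omega
  rw [finsum_eq_sum_of_support_subset _ hsub, sum_image fun j _ j' _ h => hφ h]
  refine sum_congr rfl fun j _ => congrArg _ (congrArg u (funext fun i => ?_))
  simp only [φ]
  push_cast
  ring

theorem exists_boxMoment_ne_zero (hu : u ≠ 0)
    (hsupp : ∀ x : Fin d → ℤ, u x ≠ 0 → ∀ i, -(n : ℤ) ≤ x i ∧ x i ≤ 0) :
    ∃ t : Fin d → ℕ, (∀ i, t i ≤ n) ∧ boxMoment n u t ≠ 0 := by
  by_contra! hzero
  have hrefl : (fun j : Fin d → Fin (n + 1) => u (fun i => -((j i : ℕ) : ℤ))) = 0 :=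
    Matrix.eq_zero_of_forall_sum_prod_pow_mul_eq_zero
      (f := fun a : Fin (n + 1) => ((a : ℕ) : ℝ)) (Nat.cast_injective.comp Fin.val_injective)
      fun t => hzero (fun i => t i) fun i => Fin.is_le (t i)
  refine hu (funext fun x => by_contra fun hx => hx ?_)
  have hbox := hsupp x hx
  have hx0 := congrFun hrefl fun i => ⟨(-x i).toNat, by have := hbox i; omega⟩
  rw [Pi.zero_apply] at hx0 ⊢
  convert hx0 using 2
  funext i
  have := hbox i
  simp only
  omega

end BoxSupport

theorem abs_prod_natCast_pow_le {d : ℕ} (k M : Fin d → ℕ) (L n : ℕ) (hM : ∀ i, M i ≤ n)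
    (hk : ∀ i, k i ≤ L + n) : |∏ i, ((k i : ℝ)) ^ M i| ≤ ((L : ℝ) + n) ^ (d * n) := by
  have hfactor : ∀ i, k i ^ M i ≤ (L + n) ^ n := fun i => by
    rcases (L + n).eq_zero_or_pos with h | h
    · obtain rfl : n = 0 := by omega
      simp [Nat.le_zero.mp (hM i)]
    · exact (Nat.pow_le_pow_left (hk i) _).trans (Nat.pow_le_pow_right h (hM i))
  have := prod_le_pow_card univ (fun i => k i ^ M i) _ fun i _ => hfactor i
  rw [card_univ, Fintype.card_fin, ← pow_mul, mul_comm] at this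
  rw [abs_of_nonneg (by positivity)]
  exact_mod_cast this

theorem stmt_7_general (d n : ℕ) (u : (Fin d → ℤ) → ℝ) (hu : u ≠ 0)
    (hsupp : ∀ x : Fin d → ℤ, u x ≠ 0 → ∀ i, -(n : ℤ) ≤ x i ∧ x i ≤ 0) :
    ∃ (M : Fin d → ℕ) (c : ℝ), (∀ i, M i ≤ n) ∧ c ≠ 0 ∧
      (∀ x : Fin d → ℤ, (∀ i, 1 ≤ x i) →
        ∑ᶠ k : Fin d → ℕ, (∏ i, ((k i : ℝ)) ^ (M i)) * u (fun i => x i - (k i : ℤ)) = c) ∧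
      ∀ (L : ℕ) (k : Fin d → ℕ), (∀ i, k i ≤ L + n) →
        |∏ i, ((k i : ℝ)) ^ (M i)| ≤ ((L : ℝ) + n) ^ (d * n) := by
  obtain ⟨t, htn, ht⟩ := exists_boxMoment_ne_zero hu hsupp
  obtain ⟨M, hMt, hM⟩ := exists_minimal_le_of_wellFoundedLT (boxMoment n u · ≠ 0) t ht
  have hMn : ∀ i, M i ≤ n := fun i => (hMt i).trans (htn i)
  refine ⟨M, boxMoment n u M, hMn, hM.prop, fun x hx => ?_,
    fun L k hk => abs_prod_natCast_pow_le k M L n hMn hk⟩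
  lift x to Fin d → ℕ using fun i => by linarith [hx i]
  rw [finsum_mul_sub_eq_sum_box hsupp]
  push_cast
  exact sum_prod_add_pow_mul_eq_of_lower_moments_eq_zero _ _ _
    fun s hs => not_not.mp (hM.not_prop_of_lt hs)

/-- Dimension-reduction construction: for a nonzero `u : ℤ^d → ℝ` supported in
`{-n,…,0}^d` there are exponents `M_i ≤ n` and a nonzero constant `c` such that
`∑_{k∈ℕ^d} k_1^{M_1} ⋯ k_d^{M_d} u(x - k) = c` for all `x` with all coordinates `≥ 1`;
moreover the coefficients `b_k = ∏ k_i^{M_i}` satisfy `|b_k| ≤ (L+n)^{d n}` on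
`{0,…,L+n}^d`. -/
theorem stmt_7 (d n : ℕ) (hd : 0 < d) (u : (Fin d → ℤ) → ℝ) (hu : u ≠ 0)
    (hsupp : ∀ x : Fin d → ℤ, u x ≠ 0 → ∀ i, -(n : ℤ) ≤ x i ∧ x i ≤ 0) :
    ∃ (M : Fin d → ℕ) (c : ℝ), (∀ i, M i ≤ n) ∧ c ≠ 0 ∧
      (∀ x : Fin d → ℤ, (∀ i, 1 ≤ x i) →
        ∑ᶠ k : Fin d → ℕ, (∏ i, ((k i : ℝ)) ^ (M i)) * u (fun i => x i - (k i : ℤ)) = c) ∧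
      ∀ (L : ℕ) (k : Fin d → ℕ), (∀ i, k i ≤ L + n) →
        |∏ i, ((k i : ℝ)) ^ (M i)| ≤ ((L : ℝ) + n) ^ (d * n) :=
  stmt_7_general d n u hu hsupp
end

section
/- Let A and B be self-adjoint operators on a finite-dimensional complex inner product space with rank(A - B) ≤ r, and let ρ : ℝ → ℝ be continuously differentiable with ρ' integrable and ρ having limits at ±∞ (e.g., ρ smooth, nondecreasing, equal to -1 near -∞ and 0 near +∞). Then |Tr(ρ(A)) - Tr(ρ(B))| ≤ r · ∫_ℝ |ρ'(x)| dx. -/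
/-!
With `N_A(t) = #{i | t ≤ λᵢ(A)}`, the fundamental theorem of calculus on the intervals between
`λᵢ(B)` and `λᵢ(A)` gives `∑ ρ(λᵢ(A)) - ∑ ρ(λᵢ(B)) = ∫ (N_A(t) - N_B(t)) ρ'(t) dt`, so it suffices
to show `|N_A(t) - N_B(t)| ≤ rank (A - B)` for every `t`. The span of the eigenvectors of `A` with
eigenvalue `≥ t`, the kernel of `A - B` and the span of the eigenvectors of `B` with eigenvalue
`< t` meet only in `0`: a nonzero common vector `x` would satisfy
`t ‖x‖² ≤ ⟪x, A x⟫ = ⟪x, B x⟫ < t ‖x‖²`. Counting dimensions in `ℂᴺ` gives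
`N_A(t) + (N - rank (A - B)) + (N - N_B(t)) ≤ 2N`.
-/

open Module Submodule Finset
open scoped InnerProductSpace

namespace OrthonormalBasis

variable {𝕜 E ι : Type*} [RCLike 𝕜] [NormedAddCommGroup E] [InnerProductSpace 𝕜 E] [Fintype ι]
  {T : E →ₗ[𝕜] E} {b : OrthonormalBasis ι 𝕜 E} {eig : ι → ℝ}

lemma repr_apply_of_apply_eq_smul (hT : ∀ i, T (b i) = (eig i : 𝕜) • b i) (x : E) (i : ι) :
    b.repr (T x) i = eig i * b.repr x i := by
  conv_lhs => rw [← b.sum_repr x]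
  classical
  simp [hT, smul_smul, Pi.single_apply, mul_comm]

lemma re_inner_apply_sub_eq_sum (hT : ∀ i, T (b i) = (eig i : 𝕜) • b i) (x : E) (t : ℝ) :
    RCLike.re ⟪x, T x⟫_𝕜 - t * ‖x‖ ^ 2 = ∑ i, (eig i - t) * ‖b.repr x i‖ ^ 2 := by
  rw [← b.repr.inner_map_map, ← b.repr.norm_map, EuclideanSpace.norm_sq_eq, PiLp.inner_apply,
    map_sum, mul_sum, ← sum_sub_distrib]
  refine sum_congr rfl fun i _ => ?_
  rw [repr_apply_of_apply_eq_smul hT, RCLike.inner_apply, mul_assoc, RCLike.mul_conj]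
  norm_cast
  ring

lemma finrank_span_image (b : OrthonormalBasis ι 𝕜 E) (p : ι → Prop) [DecidablePred p] :
    finrank 𝕜 (span 𝕜 (b '' {i | p i})) = #{i | p i} := by
  rw [Set.image_eq_range, finrank_span_eq_card]
  · simp
  · exact b.orthonormal.linearIndependent.comp _ Subtype.val_injective

lemma repr_eq_zero_of_mem_span_image {s : Set ι} {x : E} (hx : x ∈ span 𝕜 (b '' s)) {i : ι}
    (hi : i ∉ s) : b.repr x i = 0 := by
  rw [← b.coe_toBasis, b.toBasis.mem_span_image] at hx
  rw [← b.coe_toBasis_repr_apply]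
  by_contra h
  exact hi (hx (Finsupp.mem_support_iff.2 h))

lemma mul_norm_sq_le_re_inner_apply (hT : ∀ i, T (b i) = (eig i : 𝕜) • b i) {t : ℝ} {x : E}
    (hx : x ∈ span 𝕜 (b '' {i | t ≤ eig i})) : t * ‖x‖ ^ 2 ≤ RCLike.re ⟪x, T x⟫_𝕜 := by
  rw [← sub_nonneg, re_inner_apply_sub_eq_sum hT]
  refine sum_nonneg fun i _ => ?_
  by_cases hi : t ≤ eig i
  · have := sub_nonneg.2 hi
    positivity
  · simp [repr_eq_zero_of_mem_span_image hx hi]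

lemma re_inner_apply_lt_mul_norm_sq (hT : ∀ i, T (b i) = (eig i : 𝕜) • b i) {t : ℝ} {x : E}
    (hx : x ∈ span 𝕜 (b '' {i | eig i < t})) (hx₀ : x ≠ 0) :
    RCLike.re ⟪x, T x⟫_𝕜 < t * ‖x‖ ^ 2 := by
  rw [← sub_neg, re_inner_apply_sub_eq_sum hT]
  obtain ⟨j, hj⟩ : ∃ j, b.repr x j ≠ 0 := by
    by_contra! h
    exact hx₀ (b.repr.injective (by ext j; simp [h j]))
  have hjt : eig j < t := by_contra fun h => hj (repr_eq_zero_of_mem_span_image hx h)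
  refine sum_neg' (fun i _ => ?_) ⟨j, mem_univ j, ?_⟩
  · by_cases hi : eig i < t
    · exact mul_nonpos_of_nonpos_of_nonneg (sub_nonpos.2 hi.le) (by positivity)
    · simp [repr_eq_zero_of_mem_span_image hx hi]
  · exact mul_neg_of_neg_of_pos (sub_neg.2 hjt) (by positivity)

end OrthonormalBasis

namespace Submodule

variable {K V : Type*} [DivisionRing K] [AddCommGroup V] [Module K V] [FiniteDimensional K V]

theorem finrank_add_finrank_add_finrank_le_of_inf_eq_bot {U W X : Submodule K V}
    (h : U ⊓ W ⊓ X = ⊥) : finrank K U + finrank K W + finrank K X ≤ 2 * finrank K V := by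
  have hUW := finrank_sup_add_finrank_inf_eq U W
  have hsup := (U ⊔ W).finrank_le
  have hdisj := finrank_add_finrank_le_of_disjoint (disjoint_iff.2 h)
  omega

end Submodule


section SpectralCounting

variable {𝕜 E ι κ : Type*} [RCLike 𝕜] [NormedAddCommGroup E] [InnerProductSpace 𝕜 E]
  [Fintype ι] [Fintype κ] {T S : E →ₗ[𝕜] E} {b : OrthonormalBasis ι 𝕜 E}
  {c : OrthonormalBasis κ 𝕜 E} {eigT : ι → ℝ} {eigS : κ → ℝ}

theorem card_le_card_add_finrank_range_sub (hT : ∀ i, T (b i) = (eigT i : 𝕜) • b i)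
    (hS : ∀ k, S (c k) = (eigS k : 𝕜) • c k) (t : ℝ) :
    #{i | t ≤ eigT i} ≤ #{k | t ≤ eigS k} + finrank 𝕜 (LinearMap.range (T - S)) := by
  have : FiniteDimensional 𝕜 E := b.toBasis.finiteDimensional_of_finite
  have hdisj : span 𝕜 (b '' {i | t ≤ eigT i}) ⊓ LinearMap.ker (T - S) ⊓
      span 𝕜 (c '' {k | eigS k < t}) = ⊥ := by
    refine eq_bot_iff.2 fun x ⟨⟨hxT, hxTS⟩, hxS⟩ => ?_
    by_contra hx₀
    have hTS : T x = S x := sub_eq_zero.1 hxTS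
    have hlow := b.mul_norm_sq_le_re_inner_apply hT hxT
    have hup := c.re_inner_apply_lt_mul_norm_sq hS hxS hx₀
    rw [hTS] at hlow
    linarith
  have hdim := finrank_add_finrank_add_finrank_le_of_inf_eq_bot hdisj
  have hrank := LinearMap.finrank_range_add_finrank_ker (T - S)
  have hι := b.finrank_span_image (t ≤ eigT ·)
  have hκ := c.finrank_span_image (eigS · < t)
  have hcard := card_filter_add_card_filter_not (s := univ) (t ≤ eigS ·)
  simp only [not_le, card_univ] at hcard
  have hb := finrank_eq_card_basis b.toBasis
  have hc := finrank_eq_card_basis c.toBasis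
  omega

theorem abs_card_sub_card_le_finrank_range_sub (hT : ∀ i, T (b i) = (eigT i : 𝕜) • b i)
    (hS : ∀ k, S (c k) = (eigS k : 𝕜) • c k) (t : ℝ) :
    |(#{i | t ≤ eigT i} : ℝ) - #{k | t ≤ eigS k}| ≤ finrank 𝕜 (LinearMap.range (T - S)) := by
  have hTS : (#{i | t ≤ eigT i} : ℝ) ≤
      #{k | t ≤ eigS k} + finrank 𝕜 (LinearMap.range (T - S)) := by
    exact_mod_cast card_le_card_add_finrank_range_sub hT hS t
  have hST : (#{k | t ≤ eigS k} : ℝ) ≤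
      #{i | t ≤ eigT i} + finrank 𝕜 (LinearMap.range (T - S)) := by
    rw [← LinearMap.range_neg, neg_sub]
    exact_mod_cast card_le_card_add_finrank_range_sub hS hT t
  rw [abs_sub_le_iff]
  constructor <;> linarith

end SpectralCounting

namespace Matrix

variable {𝕜 m n : Type*} [RCLike 𝕜] [Fintype m] [Fintype n] [DecidableEq n]

lemma rank_eq_finrank_range_toEuclideanLin (M : Matrix m n 𝕜) :
    M.rank = finrank 𝕜 (LinearMap.range (toEuclideanLin M)) :=
  M.rank_eq_finrank_range_toLin (PiLp.basisFun 2 𝕜 m) (PiLp.basisFun 2 𝕜 n)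

lemma IsHermitian.toEuclideanLin_eigenvectorBasis {A : Matrix n n 𝕜} (hA : A.IsHermitian)
    (i : n) :
    toEuclideanLin A (hA.eigenvectorBasis i) = (hA.eigenvalues i : 𝕜) • hA.eigenvectorBasis i := by
  apply WithLp.ofLp_injective
  rw [ofLp_toLpLin, WithLp.ofLp_smul, ← RCLike.real_smul_eq_coe_smul]
  exact hA.mulVec_eigenvectorBasis i

end Matrix

section Integration

open MeasureTheory Set

variable {ι : Type*} [Fintype ι] {f f' : ℝ → ℝ}

theorem sum_sub_sum_eq_integral_card_mul (hf : ∀ x, HasDerivAt f (f' x) x) (hf' : Integrable f')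
    (μ ν : ι → ℝ) :
    ∑ i, f (μ i) - ∑ i, f (ν i) = ∫ t, ((#{i | t ≤ μ i} : ℝ) - #{i | t ≤ ν i}) * f' t := by
  have hind (a : ℝ) : Integrable ((Iic a).indicator f') := hf'.indicator measurableSet_Iic
  have hcount (κ : ι → ℝ) (t : ℝ) :
      (#{i | t ≤ κ i} : ℝ) * f' t = ∑ i, (Iic (κ i)).indicator f' t := by
    simp only [indicator_apply, Set.mem_Iic]
    rw [sum_ite, sum_const, sum_const_zero, add_zero, nsmul_eq_mul]
  simp_rw [sub_mul, hcount]
  rw [integral_sub (integrable_finsetSum _ fun i _ => hind _)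
    (integrable_finsetSum _ fun i _ => hind _), integral_finsetSum _ fun i _ => hind _,
    integral_finsetSum _ fun i _ => hind _, ← sum_sub_distrib, ← sum_sub_distrib]
  refine sum_congr rfl fun i _ => ?_
  rw [integral_indicator measurableSet_Iic, integral_indicator measurableSet_Iic,
    intervalIntegral.integral_Iic_sub_Iic hf'.integrableOn hf'.integrableOn,
    intervalIntegral.integral_eq_sub_of_hasDerivAt (fun x _ => hf x) hf'.intervalIntegrable]

theorem abs_sum_sub_sum_le_mul_integral (hf : ∀ x, HasDerivAt f (f' x) x) (hf' : Integrable f')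
    (μ ν : ι → ℝ) {r : ℝ} (hr : ∀ t, |(#{i | t ≤ μ i} : ℝ) - #{i | t ≤ ν i}| ≤ r) :
    |∑ i, f (μ i) - ∑ i, f (ν i)| ≤ r * ∫ t, |f' t| := by
  rw [sum_sub_sum_eq_integral_card_mul hf hf' μ ν, ← integral_const_mul r fun t => |f' t|,
    ← Real.norm_eq_abs]
  refine norm_integral_le_of_norm_le (hf'.abs.const_mul r) (ae_of_all _ fun t => ?_)
  rw [Real.norm_eq_abs, abs_mul]
  exact mul_le_mul_of_nonneg_right (hr t) (abs_nonneg _)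

end Integration

open MeasureTheory Filter

theorem stmt_10_general (N r : ℕ) (A B : Matrix (Fin N) (Fin N) ℂ)
    (hA : A.IsHermitian) (hB : B.IsHermitian) (hrank : (A - B).rank ≤ r)
    (ρ : ℝ → ℝ) (hρ : ContDiff ℝ 1 ρ) (hint : Integrable (deriv ρ)) :
    |(∑ i, ρ (hA.eigenvalues i)) - ∑ i, ρ (hB.eigenvalues i)| ≤
      (r : ℝ) * ∫ x : ℝ, |deriv ρ x| := by
  have hρ' (x : ℝ) : HasDerivAt ρ (deriv ρ x) x := (hρ.differentiable one_ne_zero x).hasDerivAt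
  refine abs_sum_sub_sum_le_mul_integral hρ' hint _ _ fun t => ?_
  calc _ ≤ (finrank ℂ (LinearMap.range (A.toEuclideanLin - B.toEuclideanLin)) : ℝ) :=
        abs_card_sub_card_le_finrank_range_sub hA.toEuclideanLin_eigenvectorBasis
          hB.toEuclideanLin_eigenvectorBasis t
    _ ≤ r := by rwa [← map_sub, ← Matrix.rank_eq_finrank_range_toEuclideanLin, Nat.cast_le]

/-- Finite-rank spectral shift bound: if `A`, `B` are Hermitian with `rank(A-B) ≤ r`, and
`ρ` is `C¹` with integrable derivative and limits at `±∞`, then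
`|Tr ρ(A) - Tr ρ(B)| ≤ r ∫ |ρ'|`, where `Tr ρ(A) = ∑ ρ(λ_i(A))`. -/
theorem stmt_10 (N r : ℕ) (A B : Matrix (Fin N) (Fin N) ℂ)
    (hA : A.IsHermitian) (hB : B.IsHermitian) (hrank : (A - B).rank ≤ r)
    (ρ : ℝ → ℝ) (hρ : ContDiff ℝ 1 ρ) (hint : Integrable (deriv ρ))
    (la lb : ℝ) (hla : Tendsto ρ atBot (nhds la)) (hlb : Tendsto ρ atTop (nhds lb)) :
    |(∑ i, ρ (hA.eigenvalues i)) - ∑ i, ρ (hB.eigenvalues i)| ≤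
      (r : ℝ) * ∫ x : ℝ, |deriv ρ x| :=
  stmt_10_general N r A B hA hB hrank ρ hρ hint
end
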